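/- arXiv:2211.00766 — 3 statements merged into one kernel-verified Lean document; each statement's English description precedes it below -/
import Mathlib

section
/- Let Q_1, …, Q_k be nonzero good polynomials in m variables. The family {Q_1, …, Q_k} is partition regular over P if and only if it is partition regular over T. -/
/-!
Partition regularity transfers along any algebra homomorphism that maps good elements to good
elements: pull the coloring back, and push the monochromatic configuration forward. Substituting
`t` for every variable maps `P` into `T`; no cancellation can occur because all coefficients are
nonnegative, which is seen by evaluating at `1`. Conversely `t ↦ x₀` embeds `T` into `P`.
-/

/-- `InT p` means `p` is a nonzero good polynomial in one variable, i.e. an element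
of the semiring `T`: nonzero, with nonnegative integer coefficients (automatic over `ℕ`)
and zero constant term. -/
def InT (p : Polynomial ℕ) : Prop := p ≠ 0 ∧ p.coeff 0 = 0

/-- `InP q` means `q` is a nonzero good polynomial in countably many variables
`x_1, x_2, …`, i.e. an element of the semiring `P`: nonzero, with nonnegative integer
coefficients (automatic over `ℕ`) and zero constant term. -/
def InP (q : MvPolynomial ℕ ℕ) : Prop := q ≠ 0 ∧ MvPolynomial.coeff 0 q = 0

def IsPartitionRegular {R A σ ι : Type*} [CommSemiring R] [CommSemiring A] [Algebra R A]
    (Good : A → Prop) (Q : ι → MvPolynomial σ R) : Prop :=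
  ∀ n : ℕ, ∀ χ : A → Fin n, ∃ a : σ → A, (∀ i, Good (a i)) ∧
    ∀ j j', χ (MvPolynomial.aeval a (Q j)) = χ (MvPolynomial.aeval a (Q j'))

theorem IsPartitionRegular.map {R A B σ ι : Type*} [CommSemiring R] [CommSemiring A]
    [CommSemiring B] [Algebra R A] [Algebra R B] {GoodA : A → Prop} {GoodB : B → Prop}
    {Q : ι → MvPolynomial σ R} (f : A →ₐ[R] B) (hf : ∀ x, GoodA x → GoodB (f x))
    (h : IsPartitionRegular GoodA Q) : IsPartitionRegular GoodB Q := by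
  intro n χ
  obtain ⟨a, ha, hχ⟩ := h n (χ ∘ f)
  refine ⟨fun i => f (a i), fun i => hf _ (ha i), fun j j' => ?_⟩
  simpa only [Function.comp_apply, MvPolynomial.comp_aeval_apply] using hχ j j'

theorem MvPolynomial.eval_one_ne_zero {σ : Type*} {q : MvPolynomial σ ℕ} (hq : q ≠ 0) :
    eval (fun _ => 1) q ≠ 0 := by
  obtain ⟨d, hd⟩ := ne_zero_iff.mp hq
  rw [eval_eq]
  simp only [one_pow, Finset.prod_const_one, mul_one]
  exact (Finset.sum_pos' (fun _ _ => Nat.zero_le _) ⟨d, mem_support_iff.mpr hd,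
    Nat.pos_of_ne_zero hd⟩).ne'

theorem Polynomial.aeval_mvPolynomial_aeval_const_X {R A σ : Type*} [CommSemiring R]
    [CommSemiring A] [Algebra R A] (c : A) (q : MvPolynomial σ R) :
    aeval c (MvPolynomial.aeval (fun _ => (X : Polynomial R)) q) =
      MvPolynomial.aeval (fun _ => c) q := by
  rw [MvPolynomial.comp_aeval_apply, aeval_X]

theorem MvPolynomial.aeval_polynomial_aeval_X {R A σ : Type*} [CommSemiring R]
    [CommSemiring A] [Algebra R A] (x : σ → A) (i : σ) (p : Polynomial R) :
    aeval x (Polynomial.aeval (X i : MvPolynomial σ R) p) = Polynomial.aeval (x i) p := by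
  rw [← Polynomial.aeval_algHom_apply, aeval_X]

theorem InP.aeval_const_X {q : MvPolynomial ℕ ℕ} (hq : InP q) :
    InT (MvPolynomial.aeval (fun _ => Polynomial.X) q) := by
  have h_eval (c : ℕ) : (MvPolynomial.aeval (fun _ => Polynomial.X) q).eval c =
      MvPolynomial.eval (fun _ => c) q := by
    rw [← Polynomial.coe_aeval_eq_eval, Polynomial.aeval_mvPolynomial_aeval_const_X,
      MvPolynomial.aeval_eq_eval]
  refine ⟨fun h0 => MvPolynomial.eval_one_ne_zero hq.1 ?_, ?_⟩
  · rw [← h_eval, h0, Polynomial.eval_zero]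
  · rw [Polynomial.coeff_zero_eq_eval_zero, h_eval, MvPolynomial.eval_zero',
      MvPolynomial.constantCoeff_eq, hq.2]

theorem InT.aeval_X {p : Polynomial ℕ} (hp : InT p) (i : ℕ) :
    InP (Polynomial.aeval (MvPolynomial.X i) p) := by
  refine ⟨fun h0 => hp.1 ?_, ?_⟩
  · simpa [h0] using
      (MvPolynomial.aeval_polynomial_aeval_X (fun _ => (Polynomial.X : Polynomial ℕ)) i p).symm
  · rw [← MvPolynomial.constantCoeff_eq, ← MvPolynomial.eval_zero',
      ← MvPolynomial.aeval_eq_eval, MvPolynomial.aeval_polynomial_aeval_X,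
      Polynomial.coe_aeval_eq_eval, ← Polynomial.coeff_zero_eq_eval_zero, hp.2]

theorem stmt8_general (m k : ℕ) (Q : Fin k → MvPolynomial (Fin m) ℕ) :
    -- partition regularity of the family over `P` ↔ over `T`
    (∀ n : ℕ, ∀ χ : MvPolynomial ℕ ℕ → Fin n,
      ∃ a : Fin m → MvPolynomial ℕ ℕ, (∀ i, InP (a i)) ∧
        ∀ j j' : Fin k, χ (MvPolynomial.aeval a (Q j)) = χ (MvPolynomial.aeval a (Q j'))) ↔
    (∀ n : ℕ, ∀ χ : Polynomial ℕ → Fin n,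
      ∃ a : Fin m → Polynomial ℕ, (∀ i, InT (a i)) ∧
        ∀ j j' : Fin k, χ (MvPolynomial.aeval a (Q j)) = χ (MvPolynomial.aeval a (Q j'))) :=
  ⟨IsPartitionRegular.map (MvPolynomial.aeval fun _ => Polynomial.X) fun _ => InP.aeval_const_X,
    IsPartitionRegular.map (Polynomial.aeval (MvPolynomial.X 0)) fun _ hp => hp.aeval_X 0⟩

theorem stmt8 (m k : ℕ) (Q : Fin k → MvPolynomial (Fin m) ℕ)
    (hQ : ∀ j, Q j ≠ 0 ∧ MvPolynomial.coeff 0 (Q j) = 0) :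
    -- partition regularity of the family over `P` ↔ over `T`
    (∀ n : ℕ, ∀ χ : MvPolynomial ℕ ℕ → Fin n,
      ∃ a : Fin m → MvPolynomial ℕ ℕ, (∀ i, InP (a i)) ∧
        ∀ j j' : Fin k, χ (MvPolynomial.aeval a (Q j)) = χ (MvPolynomial.aeval a (Q j'))) ↔
    (∀ n : ℕ, ∀ χ : Polynomial ℕ → Fin n,
      ∃ a : Fin m → Polynomial ℕ, (∀ i, InT (a i)) ∧
        ∀ j j' : Fin k, χ (MvPolynomial.aeval a (Q j)) = χ (MvPolynomial.aeval a (Q j'))) :=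
  stmt8_general m k Q
end

section
/- Let Q_1, …, Q_k be nonzero good polynomials in m variables, and suppose the family {Q_1, …, Q_k} is partition regular over T. Then for every integral domain R of characteristic zero and every finite coloring of R, there exist a_1, …, a_m ∈ R such that the elements Q_1(a_1, …, a_m), …, Q_k(a_1, …, a_m) are all nonzero and all receive the same color. -/
open Polynomial

theorem MvPolynomial.eval_pos_of_ne_zero {σ : Type*} {p : MvPolynomial σ ℕ} (hp : p ≠ 0)
    {v : σ → ℕ} (hv : ∀ i, 0 < v i) : 0 < MvPolynomial.eval v p := by
  obtain ⟨d, hd⟩ := MvPolynomial.support_nonempty.mpr hp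
  rw [MvPolynomial.eval_eq]
  refine Finset.sum_pos' (fun _ _ => Nat.zero_le _) ⟨d, hd, Nat.mul_pos ?_ ?_⟩
  · exact Nat.pos_of_ne_zero (MvPolynomial.mem_support_iff.mp hd)
  · exact Finset.prod_pos fun i _ => pow_pos (hv i) _

theorem Polynomial.eval_one_pos_of_ne_zero {p : ℕ[X]} (hp : p ≠ 0) : 0 < p.eval 1 := by
  obtain ⟨i, hi⟩ := support_nonempty.mpr hp
  rw [eval_eq_sum, Polynomial.sum]
  refine Finset.sum_pos' (fun _ _ => Nat.zero_le _) ⟨i, hi, ?_⟩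
  simpa using Nat.pos_of_ne_zero (mem_support_iff.mp hi)

theorem Polynomial.eval_one_mvPolynomial_aeval {σ : Type*} (a : σ → ℕ[X])
    (Q : MvPolynomial σ ℕ) :
    (MvPolynomial.aeval a Q).eval 1 = MvPolynomial.eval (fun i => (a i).eval 1) Q := by
  rw [← coe_aeval_eq_eval, MvPolynomial.comp_aeval_apply]
  rfl

theorem Polynomial.aeval_one_eq_natCast_eval_one {R : Type*} [Semiring R] (p : ℕ[X]) :
    aeval (1 : R) p = ((p.eval 1 : ℕ) : R) := by
  rw [aeval_def, eval₂_at_one]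
  rfl

theorem stmt10_general (m k : ℕ) (Q : Fin k → MvPolynomial (Fin m) ℕ)
    (hQ : ∀ j, Q j ≠ 0 ∧ MvPolynomial.coeff 0 (Q j) = 0)
    -- the family is partition regular over `T`:
    (hT : ∀ n : ℕ, ∀ χ : Polynomial ℕ → Fin n,
      ∃ a : Fin m → Polynomial ℕ, (∀ i, InT (a i)) ∧
        ∀ j j' : Fin k, χ (MvPolynomial.aeval a (Q j)) = χ (MvPolynomial.aeval a (Q j')))
    -- `R` is an integral domain of characteristic zero:
    (R : Type*) [CommRing R] (hchar : ∀ n : ℕ, 0 < n → (n : R) ≠ 0)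
    (n : ℕ) (χ : R → Fin n) :
    ∃ a : Fin m → R, (∀ j, MvPolynomial.aeval a (Q j) ≠ 0) ∧
      ∀ j j' : Fin k, χ (MvPolynomial.aeval a (Q j)) = χ (MvPolynomial.aeval a (Q j')) := by
  set ρ : ℕ[X] →ₐ[ℕ] R := aeval 1
  obtain ⟨a, ha, hsame⟩ := hT n (χ ∘ ρ)
  refine ⟨fun i => ρ (a i), fun j => ?_, fun j j' => ?_⟩
  · rw [← MvPolynomial.comp_aeval_apply, aeval_one_eq_natCast_eval_one,
      eval_one_mvPolynomial_aeval]
    exact hchar _ <| MvPolynomial.eval_pos_of_ne_zero (hQ j).1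
      fun i => eval_one_pos_of_ne_zero (ha i).1
  · simpa only [Function.comp_apply, MvPolynomial.comp_aeval_apply] using hsame j j'

theorem stmt10 (m k : ℕ) (Q : Fin k → MvPolynomial (Fin m) ℕ)
    (hQ : ∀ j, Q j ≠ 0 ∧ MvPolynomial.coeff 0 (Q j) = 0)
    -- the family is partition regular over `T`:
    (hT : ∀ n : ℕ, ∀ χ : Polynomial ℕ → Fin n,
      ∃ a : Fin m → Polynomial ℕ, (∀ i, InT (a i)) ∧
        ∀ j j' : Fin k, χ (MvPolynomial.aeval a (Q j)) = χ (MvPolynomial.aeval a (Q j')))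
    -- `R` is an integral domain of characteristic zero:
    (R : Type*) [CommRing R] [IsDomain R] (hchar : ∀ n : ℕ, 0 < n → (n : R) ≠ 0)
    (n : ℕ) (χ : R → Fin n) :
    ∃ a : Fin m → R, (∀ j, MvPolynomial.aeval a (Q j) ≠ 0) ∧
      ∀ j j' : Fin k, χ (MvPolynomial.aeval a (Q j)) = χ (MvPolynomial.aeval a (Q j')) :=
  stmt10_general m k Q hQ hT R hchar n χ
end

section
/- Let Q_1, …, Q_k be nonzero good polynomials in m variables. Suppose there exists a coloring χ : T → Fin n that admits no monochromatic instance of the family, i.e., there are no a_1, …, a_m ∈ T with χ(Q_1(a_1, …, a_m)) = ⋯ = χ(Q_k(a_1, …, a_m)). Then there exists a coloring χ' : T → Fin n admitting no monochromatic instance of the family and a positive integer c such that for every x ∈ T and every color K in the range of χ', there is a nonzero good polynomial P in one variable of size at most c with χ'(P(x)) = K. -/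
/-!
Colorings `ψ : ℕ[X] → Fin n` form a compact space on which `T` acts by
`shift y ψ = fun p => ψ (p ∘ y)`. The colorings without a monochromatic instance form a nonempty
closed invariant set, which by Zorn contains a minimal one, `Y`. Every orbit in `Y` is dense, so by
compactness finitely many shifts `P₁, …, Pᵣ ∈ T` move every point of `Y` into the neighbourhood
of `χ' ∈ Y` consisting of the colorings that agree with `χ'` at one witness `z_K` of each of its
colors `K`. Applied to `shift x χ' ∈ Y`, this shows that `χ'` takes the color `K` at
`z_K ∘ Pᵢ ∘ x` for some `i`, and the finitely many polynomials `z_K ∘ Pᵢ` have bounded size.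
-/

open Polynomial Set

theorem InT.comp {p q : ℕ[X]} (hp : InT p) (hq : InT q) : InT (p.comp q) := by
  refine ⟨fun h => ?_, ?_⟩
  · rcases comp_eq_zero_iff.mp h with h | ⟨-, hq'⟩
    · exact hp.1 h
    · exact hq.1 (by rw [hq', hq.2, C_0])
  · rw [coeff_zero_eq_eval_zero, eval_comp, ← coeff_zero_eq_eval_zero, hq.2,
      ← coeff_zero_eq_eval_zero, hp.2]

theorem inT_X : InT (X : ℕ[X]) := ⟨X_ne_zero, coeff_X_zero⟩

namespace Polynomial

theorem coeff_le_eval_one (p : ℕ[X]) (i : ℕ) : p.coeff i ≤ p.eval 1 := by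
  rw [eval_eq_sum, Polynomial.sum]
  simp only [one_pow, mul_one]
  by_cases hi : i ∈ p.support
  · exact Finset.single_le_sum (fun _ _ => Nat.zero_le _) hi
  · simp [notMem_support_iff.mp hi]

theorem exists_natDegree_coeff_le_of_finite {G : Set ℕ[X]} (hG : G.Finite) :
    ∃ c, 0 < c ∧ ∀ p ∈ G, p.natDegree ≤ c ∧ ∀ i, p.coeff i ≤ c := by
  obtain ⟨b, hb⟩ := (hG.image fun p => p.natDegree + p.eval 1).bddAbove
  refine ⟨b + 1, b.succ_pos, fun p hp => ?_⟩
  have hpb := hb (mem_image_of_mem _ hp)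
  exact ⟨by omega, fun i => (coeff_le_eval_one p i).trans (by omega)⟩

end Polynomial

theorem MvPolynomial.aeval_polynomial_comp {R σ : Type*} [CommSemiring R] (a : σ → R[X])
    (y : R[X]) (q : MvPolynomial σ R) :
    (aeval a q).comp y = aeval (fun i => (a i).comp y) q := by
  simp only [comp_eq_aeval, MvPolynomial.comp_aeval_apply]

theorem isOpen_setOf_eq_of_discreteTopology {X β : Type*} [TopologicalSpace X]
    [TopologicalSpace β] [DiscreteTopology β] {f g : X → β} (hf : Continuous f)
    (hg : Continuous g) : IsOpen {x | f x = g x} :=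
  (isOpen_discrete {q : β × β | q.1 = q.2}).preimage (hf.prodMk hg)

section Subsystem

variable {α : Type*} [TopologicalSpace α] {S : Set (α → α)}

variable (S) in
def IsSubsystem (Z : Set α) : Prop := Z.Nonempty ∧ IsClosed Z ∧ ∀ f ∈ S, MapsTo f Z Z

theorem exists_minimal_isSubsystem_subset [CompactSpace α] {A : Set α} (hA : IsSubsystem S A) :
    ∃ Y ⊆ A, Minimal (IsSubsystem S) Y := by
  refine zorn_superset_nonempty {Z | IsSubsystem S Z} (fun c hcS hchain hc => ?_) A hA
  have : Nonempty c := hc.to_subtype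
  refine ⟨⋂₀ c, ⟨?_, isClosed_sInter fun Z hZ => (hcS hZ).2.1, fun f hf x hx =>
    mem_sInter.2 fun Z hZ => (hcS hZ).2.2 f hf (hx Z hZ)⟩, fun Z hZ => sInter_subset_of_mem hZ⟩
  rw [sInter_eq_iInter]
  exact IsCompact.nonempty_iInter_of_directed_nonempty_isCompact_isClosed _
    (hchain.symm.directedOn (r := (· ≥ ·))).directed_val (fun Z => (hcS Z.2).1)
    (fun Z => (hcS Z.2).2.1.isCompact) (fun Z => (hcS Z.2).2.1)

theorem Minimal.subset_closure_orbit {Y : Set α} (hY : Minimal (IsSubsystem S) Y)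
    (hcont : ∀ f ∈ S, Continuous f) (hid : id ∈ S) (hcomp : ∀ f ∈ S, ∀ g ∈ S, f ∘ g ∈ S)
    {x : α} (hx : x ∈ Y) : Y ⊆ closure ((· x) '' S) := by
  have horbit : (· x) '' S ⊆ Y := by
    rintro _ ⟨f, hf, rfl⟩
    exact hY.1.2.2 f hf hx
  refine hY.2 ⟨⟨x, subset_closure ⟨id, hid, rfl⟩⟩, isClosed_closure, fun f hf => ?_⟩
    (closure_minimal horbit hY.1.2.1)
  refine MapsTo.closure ?_ (hcont f hf)
  rintro _ ⟨g, hg, rfl⟩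
  exact ⟨f ∘ g, hcomp f hf g hg, rfl⟩

theorem Minimal.exists_finite_cover [CompactSpace α] {Y : Set α}
    (hY : Minimal (IsSubsystem S) Y) (hcont : ∀ f ∈ S, Continuous f) (hid : id ∈ S)
    (hcomp : ∀ f ∈ S, ∀ g ∈ S, f ∘ g ∈ S) {U : Set α} (hU : IsOpen U) (hUY : (U ∩ Y).Nonempty) :
    ∃ I ⊆ S, I.Finite ∧ Y ⊆ ⋃ f ∈ I, f ⁻¹' U := by
  refine hY.1.2.1.isCompact.elim_finite_subcover_image (fun f hf => hU.preimage (hcont f hf))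
    fun x hx => ?_
  obtain ⟨u, huU, huY⟩ := hUY
  obtain ⟨_, hfx, f, hf, rfl⟩ :=
    mem_closure_iff.1 (hY.subset_closure_orbit hcont hid hcomp hx huY) U hU huU
  exact mem_iUnion₂.2 ⟨f, hf, hfx⟩

end Subsystem

namespace GoodPolynomial

variable {β : Type*}

noncomputable def shift (y : ℕ[X]) (ψ : ℕ[X] → β) : ℕ[X] → β := fun p => ψ (p.comp y)

variable (β) in
def shifts : Set ((ℕ[X] → β) → ℕ[X] → β) := shift '' {y | InT y}

theorem continuous_of_mem_shifts [TopologicalSpace β] {f : (ℕ[X] → β) → ℕ[X] → β}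
    (hf : f ∈ shifts β) : Continuous f := by
  obtain ⟨y, -, rfl⟩ := hf
  exact continuous_pi fun p => continuous_apply (p.comp y)

theorem id_mem_shifts : id ∈ shifts β :=
  ⟨X, inT_X, _root_.funext fun ψ => _root_.funext fun p => congrArg ψ p.comp_X⟩

theorem comp_mem_shifts {f g : (ℕ[X] → β) → ℕ[X] → β} (hf : f ∈ shifts β)
    (hg : g ∈ shifts β) : f ∘ g ∈ shifts β := by
  obtain ⟨y, hy, rfl⟩ := hf
  obtain ⟨P, hP, rfl⟩ := hg
  exact ⟨y.comp P, hy.comp hP, _root_.funext fun ψ => _root_.funext fun p =>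
    congrArg ψ (p.comp_assoc y P).symm⟩

variable {σ ι : Type*}

def monochromaticFree (Q : ι → MvPolynomial σ ℕ) : Set (ℕ[X] → β) :=
  {ψ | ¬ ∃ a : σ → ℕ[X], (∀ i, InT (a i)) ∧
    ∀ j j', ψ (MvPolynomial.aeval a (Q j)) = ψ (MvPolynomial.aeval a (Q j'))}

theorem isClosed_monochromaticFree [TopologicalSpace β] [DiscreteTopology β] [Finite ι]
    (Q : ι → MvPolynomial σ ℕ) : IsClosed (monochromaticFree (β := β) Q) := by
  have hmono : ∀ a : σ → ℕ[X], IsOpen {ψ : ℕ[X] → β |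
      ∀ j j', ψ (MvPolynomial.aeval a (Q j)) = ψ (MvPolynomial.aeval a (Q j'))} := fun a => by
    simp only [ofPred_forall]
    exact isOpen_iInter_of_finite fun j => isOpen_iInter_of_finite fun j' =>
      isOpen_setOf_eq_of_discreteTopology (continuous_apply _) (continuous_apply _)
  have hfree : monochromaticFree (β := β) Q = ⋂ a ∈ {a : σ → ℕ[X] | ∀ i, InT (a i)},
      {ψ | ∀ j j', ψ (MvPolynomial.aeval a (Q j)) = ψ (MvPolynomial.aeval a (Q j'))}ᶜ := by
    ext ψ
    simp [monochromaticFree]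
  rw [hfree]
  exact isClosed_biInter fun a _ => (hmono a).isClosed_compl

theorem mapsTo_monochromaticFree (Q : ι → MvPolynomial σ ℕ) {f : (ℕ[X] → β) → ℕ[X] → β}
    (hf : f ∈ shifts β) : MapsTo f (monochromaticFree Q) (monochromaticFree Q) := by
  obtain ⟨y, hy, rfl⟩ := hf
  rintro ψ hψ ⟨a, ha, hmono⟩
  refine hψ ⟨fun i => (a i).comp y, fun i => (ha i).comp hy, fun j j' => ?_⟩
  simpa only [shift, MvPolynomial.aeval_polynomial_comp] using hmono j j'

end GoodPolynomial

open GoodPolynomial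

theorem stmt11_general (m k n : ℕ) (Q : Fin k → MvPolynomial (Fin m) ℕ)
    (χ : Polynomial ℕ → Fin n)
    -- `χ` admits no monochromatic instance of the family in `T`:
    (hχ : ¬ ∃ a : Fin m → Polynomial ℕ, (∀ i, InT (a i)) ∧
      ∀ j j' : Fin k, χ (MvPolynomial.aeval a (Q j)) = χ (MvPolynomial.aeval a (Q j'))) :
    ∃ χ' : Polynomial ℕ → Fin n,
      -- `χ'` also admits no monochromatic instance of the family in `T`:
      (¬ ∃ a : Fin m → Polynomial ℕ, (∀ i, InT (a i)) ∧
        ∀ j j' : Fin k, χ' (MvPolynomial.aeval a (Q j)) = χ' (MvPolynomial.aeval a (Q j'))) ∧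
      -- and `χ'` is polynomially syndetic:
      ∃ c : ℕ, 0 < c ∧
        ∀ x : Polynomial ℕ, InT x → ∀ K : Fin n,
          (∃ z : Polynomial ℕ, InT z ∧ χ' z = K) →
          ∃ P : Polynomial ℕ, P ≠ 0 ∧ P.coeff 0 = 0 ∧
            P.natDegree ≤ c ∧ (∀ i, P.coeff i ≤ c) ∧
            χ' (Polynomial.aeval x P) = K := by
  obtain ⟨Y, hYfree, hY⟩ := exists_minimal_isSubsystem_subset (S := shifts (Fin n))
    ⟨⟨χ, hχ⟩, isClosed_monochromaticFree Q, fun _ => mapsTo_monochromaticFree Q⟩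
  obtain ⟨χ', hχ'⟩ := hY.1.1
  let z : Fin n → ℕ[X] := Function.invFunOn χ' {w | InT w}
  have hV : IsOpen {ψ : ℕ[X] → Fin n | ∀ K, ψ (z K) = χ' (z K)} := by
    simpa only [ofPred_forall] using isOpen_iInter_of_finite fun K =>
      isOpen_setOf_eq_of_discreteTopology (continuous_apply (z K)) continuous_const
  obtain ⟨I, hIS, hIfin, hcover⟩ := hY.exists_finite_cover (fun _ => continuous_of_mem_shifts)
    id_mem_shifts (fun _ hf _ hg => comp_mem_shifts hf hg) hV ⟨χ', fun _ => rfl, hχ'⟩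
  obtain ⟨J, hJT, hJfin, rfl⟩ := exists_subset_image_finite_and.1 ⟨I, hIS, hIfin, rfl⟩
  obtain ⟨c, hc, hsize⟩ := exists_natDegree_coeff_le_of_finite
    ((finite_univ (α := Fin n)).image2 (fun K P => (z K).comp P) hJfin)
  refine ⟨χ', hYfree hχ', c, hc, fun x hx K hK => ?_⟩
  obtain ⟨_, ⟨P, hPJ, rfl⟩, hPV⟩ :=
    mem_iUnion₂.1 (hcover (hY.1.2.2 _ ⟨x, hx, rfl⟩ hχ'))
  have hPK : InT ((z K).comp P) := InT.comp (Function.invFunOn_mem hK) (hJT hPJ)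
  obtain ⟨hdeg, hcoeff⟩ := hsize _ ⟨K, mem_univ K, P, hPJ, rfl⟩
  refine ⟨_, hPK.1, hPK.2, hdeg, hcoeff, ?_⟩
  rw [← comp_eq_aeval]
  exact (hPV K).trans (Function.invFunOn_eq hK)

theorem stmt11 (m k n : ℕ) (Q : Fin k → MvPolynomial (Fin m) ℕ)
    (hQ : ∀ j, Q j ≠ 0 ∧ MvPolynomial.coeff 0 (Q j) = 0)
    (χ : Polynomial ℕ → Fin n)
    -- `χ` admits no monochromatic instance of the family in `T`:
    (hχ : ¬ ∃ a : Fin m → Polynomial ℕ, (∀ i, InT (a i)) ∧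
      ∀ j j' : Fin k, χ (MvPolynomial.aeval a (Q j)) = χ (MvPolynomial.aeval a (Q j'))) :
    ∃ χ' : Polynomial ℕ → Fin n,
      -- `χ'` also admits no monochromatic instance of the family in `T`:
      (¬ ∃ a : Fin m → Polynomial ℕ, (∀ i, InT (a i)) ∧
        ∀ j j' : Fin k, χ' (MvPolynomial.aeval a (Q j)) = χ' (MvPolynomial.aeval a (Q j'))) ∧
      -- and `χ'` is polynomially syndetic:
      ∃ c : ℕ, 0 < c ∧
        ∀ x : Polynomial ℕ, InT x → ∀ K : Fin n,
          (∃ z : Polynomial ℕ, InT z ∧ χ' z = K) →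
          ∃ P : Polynomial ℕ, P ≠ 0 ∧ P.coeff 0 = 0 ∧
            P.natDegree ≤ c ∧ (∀ i, P.coeff i ≤ c) ∧
            χ' (Polynomial.aeval x P) = K :=
  stmt11_general m k n Q χ hχ
end
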